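/- Let w be a word over Fin n and k a letter. If c is canonical with c ~ w, d is canonical with d ~ filter≥k w, and e is canonical with e ~ filter≥k c, then d = e. (In the paper's notation: Can_{{k,…,n}} w = Can_{{k,…,n}} Can w.) -/

import Mathlib

variable {n : ℕ}

/-- Generating relation of the Kiselman congruence on words over `Fin n`. -/
inductive KisStep : List (Fin n) → List (Fin n) → Prop
  | idem : ∀ (u v : List (Fin n)) (i : Fin n),
      KisStep (u ++ [i, i] ++ v) (u ++ [i] ++ v)
  | left : ∀ (u v : List (Fin n)) (i j : Fin n), i < j →
      KisStep (u ++ [i, j, i] ++ v) (u ++ [i, j] ++ v)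
  | right : ∀ (u v : List (Fin n)) (i j : Fin n), i < j →
      KisStep (u ++ [j, i, j] ++ v) (u ++ [i, j] ++ v)

/-- The Kiselman congruence: smallest equivalence relation containing `KisStep`. -/
def KisEquiv (x y : List (Fin n)) : Prop := Relation.EqvGen KisStep x y

/-- An infix `[i] ++ u ++ [i]` is special if `u` contains a letter `> i` and a letter `< i`. -/
def Special (i : Fin n) (u : List (Fin n)) : Prop :=
  (∃ j ∈ u, i < j) ∧ (∃ j ∈ u, j < i)

/-- A word is canonical if all its infixes of the form `[i] ++ u ++ [i]` are special. -/
def Canonical (w : List (Fin n)) : Prop :=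
  ∀ (i : Fin n) (u : List (Fin n)), ([i] ++ u ++ [i]) <:+: w → Special i u

/-- Delete all letters strictly smaller than `k`. -/
def filterGE (k : Fin n) (w : List (Fin n)) : List (Fin n) :=
  w.filter (fun a => decide (k ≤ a))

/-- `trunc i w` is the longest suffix of `w` with head `i`, or `[]` if `i ∉ w`. -/
def trunc (i : Fin n) : List (Fin n) → List (Fin n)
  | [] => []
  | a :: t => if a = i then a :: t else trunc i t

/-- Longest suffix of `w` whose head is `< k` (as a natural number), or `[]`. -/
def truncLtN (k : ℕ) : List (Fin n) → List (Fin n)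
  | [] => []
  | a :: t => if (a : ℕ) < k then a :: t else truncLtN k t

/-- `join u v = u⁺ ++ v`, where `u⁻` is the longest suffix of `u` that is a sublist of `v`. -/
def join : List (Fin n) → List (Fin n) → List (Fin n)
  | [], v => v
  | a :: t, v => if (a :: t).Sublist v then v else a :: join t v

/-- The local update function at vertex `i` of the update system `S_n^⋆`. -/
def Fstep (i : Fin n) (s : Fin n → List (Fin n)) : Fin n → List (Fin n) :=
  Function.update s i
    (i :: List.foldr join []
      ((((List.finRange n).filter (fun j => decide (i < j))).reverse).map s))

/-- The evolution induced by a word (rightmost letter acts first). -/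
def Fword (w : List (Fin n)) (s : Fin n → List (Fin n)) : Fin n → List (Fin n) :=
  w.foldr Fstep s

/-- The initial system state `⋆`. -/
def starState : Fin n → List (Fin n) := fun _ => []


/-!
Both `d` and `e` are canonical words in the `~`-class of `filter≥k w`: deleting the letters below
`k` turns each defining relation of `~` into an instance of `~` or into an equality, so
`filter≥k c ~ filter≥k w`. It remains to see that a `~`-class contains at most one canonical word.
Orient the relations into the reduction that deletes one of two occurrences of a letter `i` when
all letters strictly between them are `≤ i` (the left one goes) or all are `≥ i` (the right one
goes). Canonical words are irreducible, and two one-step reductions of a word can be rejoined by at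
most one further step on each side, so by the Church–Rosser property two equivalent canonical words
coincide.
-/

open Relation

theorem List.append_cons_eq_append_cons_cases {α : Type*} {u₁ u₂ v₁ v₂ : List α} {a b : α}
    (h : u₁ ++ a :: v₁ = u₂ ++ b :: v₂) :
    (u₁ = u₂ ∧ a = b ∧ v₁ = v₂) ∨ (∃ w, u₂ = u₁ ++ a :: w ∧ v₁ = w ++ b :: v₂) ∨
      (∃ w, u₁ = u₂ ++ b :: w ∧ v₂ = w ++ a :: v₁) := by
  rcases List.append_eq_append_iff.mp h with ⟨_ | ⟨c, w⟩, rfl, h⟩ | ⟨_ | ⟨c, w⟩, rfl, h⟩ <;>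
    simp_all [eq_comm]

theorem List.append_cons_eq_cons_append {α : Type*} {m : List α} {i : α} (h : ∀ a ∈ m, a = i)
    (v : List α) : m ++ i :: v = i :: (m ++ v) := by
  induction m with
  | nil => rfl
  | cons a m ih =>
    rw [List.forall_mem_cons] at h
    simp [h.1, ih h.2]

section Reduction

/-- The condition for deleting a mark of `i :: (m ++ i :: v)`: `b = true` deletes the right mark
and needs `i ≤ m`, `b = false` deletes the left mark and needs `m ≤ i`. -/
def DropCond (b : Bool) (i : Fin n) (m : List (Fin n)) : Prop :=
  ∀ a ∈ m, if b then i ≤ a else a ≤ i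

def dropMark : Bool → List (Fin n) → Fin n → List (Fin n) → List (Fin n) → List (Fin n)
  | true, u, i, m, v => u ++ i :: (m ++ v)
  | false, u, i, m, v => u ++ (m ++ i :: v)

inductive KisReduce : List (Fin n) → List (Fin n) → Prop
  | drop (b : Bool) (u : List (Fin n)) (i : Fin n) (m v : List (Fin n)) :
      DropCond b i m → KisReduce (u ++ i :: (m ++ i :: v)) (dropMark b u i m v)

theorem KisReduce.of_eq {x y : List (Fin n)} (b : Bool) (u : List (Fin n)) (i : Fin n)
    (m v : List (Fin n)) (h : DropCond b i m)
    (hx : x = u ++ i :: (m ++ i :: v) := by simp [dropMark])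
    (hy : y = dropMark b u i m v := by simp [dropMark]) :
    KisReduce x y := by
  subst hx hy
  exact .drop b u i m v h

theorem dropCond_append {b : Bool} {i : Fin n} {p q : List (Fin n)} :
    DropCond b i (p ++ q) ↔ DropCond b i p ∧ DropCond b i q :=
  List.forall_mem_append

theorem dropCond_append_cons {b : Bool} {i j : Fin n} {p q : List (Fin n)} :
    DropCond b i (p ++ j :: q) ↔
      DropCond b i p ∧ (if b then i ≤ j else j ≤ i) ∧ DropCond b i q :=
  dropCond_append.trans (and_congr_right' List.forall_mem_cons)

theorem DropCond.mono {b : Bool} {i : Fin n} {m m' : List (Fin n)} (h : DropCond b i m)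
    (hm : m' ⊆ m) : DropCond b i m' :=
  fun a ha => h a (hm ha)

theorem dropMark_false_eq_true {i : Fin n} {m : List (Fin n)} (hl : DropCond false i m)
    (hr : DropCond true i m) (u v : List (Fin n)) :
    dropMark false u i m v = dropMark true u i m v := by
  have hm : ∀ a ∈ m, a = i := fun a ha =>
    le_antisymm (by simpa using hl a ha) (by simpa using hr a ha)
  simp [dropMark, List.append_cons_eq_cons_append hm]

theorem dropMark_append (b : Bool) (u : List (Fin n)) (i : Fin n) (m v r : List (Fin n)) :
    dropMark b u i m (v ++ r) = dropMark b u i m v ++ r := by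
  cases b <;> simp [dropMark]

theorem dropMark_eq_append (b : Bool) (u : List (Fin n)) (i : Fin n) (m v : List (Fin n)) :
    dropMark b u i m v = u ++ dropMark b [] i m v := by
  cases b <;> simp [dropMark]

theorem join_of_eq {y z : List (Fin n)} (h : y = z) : Join (ReflGen KisReduce) y z :=
  h ▸ refl y

variable {u : List (Fin n)} {i j : Fin n}

theorem join_dropMark_same {b₁ b₂ : Bool} {m v : List (Fin n)} (h₁ : DropCond b₁ i m)
    (h₂ : DropCond b₂ i m) :
    Join (ReflGen KisReduce) (dropMark b₁ u i m v) (dropMark b₂ u i m v) := by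
  cases b₁ <;> cases b₂
  · exact join_of_eq rfl
  · exact join_of_eq (dropMark_false_eq_true h₁ h₂ u v)
  · exact join_of_eq (dropMark_false_eq_true h₂ h₁ u v).symm
  · exact join_of_eq rfl

theorem join_dropMark_same_left {b₁ b₂ : Bool} {m w v : List (Fin n)} (h₁ : DropCond b₁ i m)
    (h₂ : DropCond b₂ i (m ++ i :: w)) :
    Join (ReflGen KisReduce) (dropMark b₁ u i m (w ++ i :: v))
      (dropMark b₂ u i (m ++ i :: w) v) := by
  obtain ⟨hm, -, hw⟩ := dropCond_append_cons.1 h₂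
  cases b₁ <;> cases b₂
  · exact join_of_eq (by simp [dropMark])
  · exact ⟨u ++ (m ++ i :: (w ++ v)), .single (.of_eq true (u ++ m) i w v hw),
      .single (.of_eq false u i m (w ++ v) h₁)⟩
  · exact ⟨u ++ ((m ++ w) ++ i :: v), .single (.of_eq false u i (m ++ w) v
      (dropCond_append.2 ⟨hm, hw⟩)), .single (.of_eq false (u ++ m) i w v hw)⟩
  · exact ⟨u ++ i :: ((m ++ w) ++ v), .single (.of_eq true u i (m ++ w) v
      (dropCond_append.2 ⟨h₁, hw⟩)), .single (.of_eq true u i m (w ++ v) h₁)⟩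

theorem join_dropMark_chain {b₁ b₂ : Bool} {m₁ m₂ v : List (Fin n)} (h₁ : DropCond b₁ i m₁)
    (h₂ : DropCond b₂ i m₂) :
    Join (ReflGen KisReduce) (dropMark b₁ u i m₁ (m₂ ++ i :: v))
      (dropMark b₂ (u ++ i :: m₁) i m₂ v) := by
  cases b₁ <;> cases b₂
  · exact ⟨u ++ (m₁ ++ (m₂ ++ i :: v)), .single (.of_eq false (u ++ m₁) i m₂ v h₂),
      .single (.of_eq false u i (m₁ ++ m₂) v (dropCond_append.2 ⟨h₁, h₂⟩))⟩
  · exact ⟨u ++ (m₁ ++ i :: (m₂ ++ v)), .single (.of_eq true (u ++ m₁) i m₂ v h₂),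
      .single (.of_eq false u i m₁ (m₂ ++ v) h₁)⟩
  · exact join_of_eq (by simp [dropMark])
  · exact ⟨u ++ i :: ((m₁ ++ m₂) ++ v), .single (.of_eq true u i (m₁ ++ m₂) v
      (dropCond_append.2 ⟨h₁, h₂⟩)), .single (.of_eq true u i m₁ (m₂ ++ v) h₁)⟩

theorem join_dropMark_same_right {b₁ b₂ : Bool} {w₁ w₂ v : List (Fin n)}
    (h₁ : DropCond b₁ i (w₁ ++ i :: w₂)) (h₂ : DropCond b₂ i w₂) :
    Join (ReflGen KisReduce) (dropMark b₁ u i (w₁ ++ i :: w₂) v)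
      (dropMark b₂ (u ++ i :: w₁) i w₂ v) := by
  obtain ⟨hw₁, -, hw₂⟩ := dropCond_append_cons.1 h₁
  cases b₁ <;> cases b₂
  · exact ⟨u ++ (w₁ ++ (w₂ ++ i :: v)), .single (.of_eq false (u ++ w₁) i w₂ v hw₂),
      .single (.of_eq false u i (w₁ ++ w₂) v (dropCond_append.2 ⟨hw₁, hw₂⟩))⟩
  · exact ⟨u ++ (w₁ ++ i :: (w₂ ++ v)), .single (.of_eq true (u ++ w₁) i w₂ v h₂),
      .single (.of_eq false u i w₁ (w₂ ++ v) hw₁)⟩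
  · exact join_of_eq (by rw [dropMark_false_eq_true h₂ hw₂]; simp [dropMark])
  · exact join_of_eq (by simp [dropMark])

theorem join_dropMark_disjoint {b₁ b₂ : Bool} {m₁ w m₂ v : List (Fin n)}
    (h₁ : DropCond b₁ i m₁) (h₂ : DropCond b₂ j m₂) :
    Join (ReflGen KisReduce) (dropMark b₁ u i m₁ (w ++ j :: (m₂ ++ j :: v)))
      (dropMark b₂ (u ++ i :: (m₁ ++ i :: w)) j m₂ v) :=
  ⟨dropMark b₂ (dropMark b₁ u i m₁ w) j m₂ v,
    .single (.of_eq b₂ (dropMark b₁ u i m₁ w) j m₂ v h₂ (dropMark_append ..) rfl),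
    .single (.of_eq b₁ u i m₁ (w ++ dropMark b₂ [] j m₂ v) h₁
      (by rw [dropMark_eq_append]; simp) (by rw [dropMark_append, ← dropMark_eq_append]))⟩

theorem join_dropMark_nested {b₁ b₂ : Bool} {w₁ m₂ w₃ v : List (Fin n)}
    (h₁ : DropCond b₁ i (w₁ ++ j :: (m₂ ++ j :: w₃))) (h₂ : DropCond b₂ j m₂) :
    Join (ReflGen KisReduce) (dropMark b₁ u i (w₁ ++ j :: (m₂ ++ j :: w₃)) v)
      (dropMark b₂ (u ++ i :: w₁) j m₂ (w₃ ++ i :: v)) := by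
  have h₁' : DropCond b₁ i (w₁ ++ dropMark b₂ [] j m₂ w₃) :=
    h₁.mono fun a => by cases b₂ <;> simp [dropMark] <;> tauto
  refine ⟨dropMark b₁ u i (w₁ ++ dropMark b₂ [] j m₂ w₃) v, .single ?_,
    .single (.of_eq b₁ u i _ v h₁' (by cases b₂ <;> simp [dropMark]) rfl)⟩
  cases b₁
  · exact .of_eq b₂ (u ++ w₁) j m₂ (w₃ ++ i :: v) h₂ (by simp [dropMark])
      (by cases b₂ <;> simp [dropMark])
  · exact .of_eq b₂ (u ++ i :: w₁) j m₂ (w₃ ++ v) h₂ (by simp [dropMark])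
      (by cases b₂ <;> simp [dropMark])

theorem join_dropMark_crossing {b₁ b₂ : Bool} {w₁ w₂ w₃ v : List (Fin n)}
    (h₁ : DropCond b₁ i (w₁ ++ j :: w₂)) (h₂ : DropCond b₂ j (w₂ ++ i :: w₃)) :
    Join (ReflGen KisReduce) (dropMark b₁ u i (w₁ ++ j :: w₂) (w₃ ++ j :: v))
      (dropMark b₂ (u ++ i :: w₁) j (w₂ ++ i :: w₃) v) := by
  obtain ⟨hw₁, hj, hw₂⟩ := dropCond_append_cons.1 h₁
  obtain ⟨gw₂, gi, gw₃⟩ := dropCond_append_cons.1 h₂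
  cases b₁ <;> cases b₂
  · obtain rfl : i = j := le_antisymm (by simpa using gi) (by simpa using hj)
    exact ⟨u ++ (w₁ ++ (w₂ ++ i :: (w₃ ++ i :: v))),
      .single (.of_eq false (u ++ w₁) i w₂ (w₃ ++ i :: v) hw₂),
      .single (.of_eq false u i (w₁ ++ w₂) (w₃ ++ i :: v) (dropCond_append.2 ⟨hw₁, hw₂⟩))⟩
  · exact ⟨u ++ (w₁ ++ j :: (w₂ ++ i :: (w₃ ++ v))),
      .single (.of_eq true (u ++ w₁) j (w₂ ++ i :: w₃) v h₂),
      .single (.of_eq false u i (w₁ ++ j :: w₂) (w₃ ++ v) h₁)⟩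
  · exact ⟨u ++ i :: (w₁ ++ (w₂ ++ (w₃ ++ j :: v))),
      .single (.of_eq false (u ++ i :: w₁) j (w₂ ++ w₃) v (dropCond_append.2 ⟨gw₂, gw₃⟩)),
      .single (.of_eq true u i (w₁ ++ w₂) (w₃ ++ j :: v) (dropCond_append.2 ⟨hw₁, hw₂⟩))⟩
  · obtain rfl : i = j := le_antisymm (by simpa using hj) (by simpa using gi)
    exact ⟨u ++ i :: (w₁ ++ i :: (w₂ ++ (w₃ ++ v))),
      .single (.of_eq true (u ++ i :: w₁) i (w₂ ++ w₃) v (dropCond_append.2 ⟨gw₂, gw₃⟩)),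
      .single (.of_eq true u i (w₁ ++ i :: w₂) (w₃ ++ v) h₁)⟩

theorem join_dropMark_of_later_start {b₁ b₂ : Bool} {w₁ m₁ v₁ m₂ v₂ : List (Fin n)}
    (h₁ : DropCond b₁ i m₁) (h₂ : DropCond b₂ j m₂)
    (heq : m₁ ++ i :: v₁ = w₁ ++ j :: (m₂ ++ j :: v₂)) :
    Join (ReflGen KisReduce) (dropMark b₁ u i m₁ v₁) (dropMark b₂ (u ++ i :: w₁) j m₂ v₂) := by
  rcases List.append_cons_eq_append_cons_cases heq with
    ⟨rfl, rfl, rfl⟩ | ⟨w₂, rfl, rfl⟩ | ⟨w₂, rfl, heq'⟩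
  · exact join_dropMark_chain h₁ h₂
  · exact join_dropMark_disjoint h₁ h₂
  rcases List.append_cons_eq_append_cons_cases heq' with
    ⟨rfl, rfl, rfl⟩ | ⟨w₃, rfl, rfl⟩ | ⟨w₃, rfl, rfl⟩
  · exact join_dropMark_same_right h₁ h₂
  · exact join_dropMark_nested h₁ h₂
  · exact join_dropMark_crossing h₁ h₂

theorem KisReduce.join {x y z : List (Fin n)} (hy : KisReduce x y) (hz : KisReduce x z) :
    Join (ReflGen KisReduce) y z := by
  obtain ⟨b₁, u₁, i, m₁, v₁, h₁⟩ := hy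
  generalize hx : u₁ ++ i :: (m₁ ++ i :: v₁) = x at hz
  obtain ⟨b₂, u₂, j, m₂, v₂, h₂⟩ := hz
  rcases List.append_cons_eq_append_cons_cases hx with
    ⟨rfl, rfl, hrest⟩ | ⟨w, rfl, hrest⟩ | ⟨w, rfl, hrest⟩
  · rcases List.append_cons_eq_append_cons_cases hrest with
      ⟨rfl, -, rfl⟩ | ⟨w, rfl, rfl⟩ | ⟨w, rfl, rfl⟩
    · exact join_dropMark_same h₁ h₂
    · exact join_dropMark_same_left h₁ h₂
    · exact symm (join_dropMark_same_left h₂ h₁)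
  · exact join_dropMark_of_later_start h₁ h₂ hrest
  · exact symm (join_dropMark_of_later_start h₂ h₁ hrest)

theorem KisStep.kisReduce {x y : List (Fin n)} (h : KisStep x y) : KisReduce x y := by
  rcases h with ⟨u, v, i⟩ | ⟨u, v, i, j, hij⟩ | ⟨u, v, i, j, hij⟩
  · exact .of_eq true u i [] v (by simp [DropCond])
  · exact .of_eq true u i [j] v (by simp [DropCond, hij.le])
  · exact .of_eq false u j [i] v (by simp [DropCond, hij.le])

theorem Canonical.not_kisReduce {c y : List (Fin n)} (hc : Canonical c) : ¬KisReduce c y := by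
  rintro ⟨b, u, i, m, v, h⟩
  obtain ⟨⟨j, hj, hij⟩, ⟨j', hj', hj'i⟩⟩ := hc i m ⟨u, v, by simp⟩
  cases b
  · exact not_le.mpr hij (by simpa using h j hj)
  · exact not_le.mpr hj'i (by simpa using h j' hj')

theorem Canonical.eq_of_reflTransGen {c y : List (Fin n)} (hc : Canonical c)
    (h : ReflTransGen KisReduce c y) : c = y := by
  rcases h.cases_head with rfl | ⟨z, hz, -⟩
  · rfl
  · exact (hc.not_kisReduce hz).elim

theorem Canonical.eq_of_eqvGen {c d : List (Fin n)} (hc : Canonical c) (hd : Canonical d)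
    (h : EqvGen KisReduce c d) : c = d := by
  have hequiv : Equivalence (Join (ReflTransGen (@KisReduce n))) :=
    equivalence_join_reflTransGen fun _ _ _ hy hz =>
      (hy.join hz).imp fun _ hw => ⟨hw.1, hw.2.to_reflTransGen⟩
  obtain ⟨w, hcw, hdw⟩ := hequiv.eqvGen_iff.mp (h.mono fun _ b hab => ⟨b, .single hab, .refl⟩)
  rw [hc.eq_of_reflTransGen hcw, hd.eq_of_reflTransGen hdw]

theorem Canonical.eq_of_kisEquiv {c d : List (Fin n)} (hc : Canonical c) (hd : Canonical d)
    (h : KisEquiv c d) : c = d :=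
  hc.eq_of_eqvGen hd (h.mono fun _ _ => KisStep.kisReduce)

end Reduction

theorem Relation.EqvGen.lift {α β : Type*} {r : α → α → Prop} {p : β → β → Prop} (f : α → β)
    (hf : ∀ a b, r a b → EqvGen p (f a) (f b)) {a b : α} (h : EqvGen r a b) :
    EqvGen p (f a) (f b) := by
  induction h with
  | rel _ _ h => exact hf _ _ h
  | refl => exact .refl _
  | symm _ _ _ ih => exact .symm _ _ ih
  | trans _ _ _ _ _ ih₁ ih₂ => exact .trans _ _ _ ih₁ ih₂

section Filter

variable {s t : List (Fin n)}

theorem KisStep.kisEquiv (h : KisStep s t) : KisEquiv s t :=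
  .rel _ _ h

theorem KisEquiv.refl (s : List (Fin n)) : KisEquiv s s :=
  EqvGen.refl s

theorem KisStep.append_append (h : KisStep s t) (p q : List (Fin n)) :
    KisStep (p ++ s ++ q) (p ++ t ++ q) := by
  rcases h with ⟨u, v, i⟩ | ⟨u, v, i, j, hij⟩ | ⟨u, v, i, j, hij⟩
  · simpa using KisStep.idem (p ++ u) (v ++ q) i
  · simpa using KisStep.left (p ++ u) (v ++ q) i j hij
  · simpa using KisStep.right (p ++ u) (v ++ q) i j hij

theorem KisEquiv.append_append (h : KisEquiv s t) (p q : List (Fin n)) :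
    KisEquiv (p ++ s ++ q) (p ++ t ++ q) :=
  EqvGen.lift (fun s => p ++ s ++ q) (fun _ _ h => (h.append_append p q).kisEquiv) h

theorem filterGE_append (k : Fin n) (u v : List (Fin n)) :
    filterGE k (u ++ v) = filterGE k u ++ filterGE k v :=
  List.filter_append ..

theorem KisStep.kisEquiv_filterGE (k : Fin n) (h : KisStep s t) :
    KisEquiv (filterGE k s) (filterGE k t) := by
  rcases h with ⟨u, v, i⟩ | ⟨u, v, i, j, hij⟩ | ⟨u, v, i, j, hij⟩ <;>
    simp only [filterGE_append] <;> apply KisEquiv.append_append <;> by_cases hi : k ≤ i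
  · simpa [filterGE, hi] using (KisStep.idem [] [] i).kisEquiv
  · simpa [filterGE, hi] using KisEquiv.refl _
  · simpa [filterGE, hi, hi.trans hij.le] using (KisStep.left [] [] i j hij).kisEquiv
  · simpa [filterGE, List.filter_cons, hi] using KisEquiv.refl _
  · simpa [filterGE, hi, hi.trans hij.le] using (KisStep.right [] [] i j hij).kisEquiv
  · by_cases hj : k ≤ j
    · simpa [filterGE, hi, hj] using (KisStep.idem [] [] j).kisEquiv
    · simpa [filterGE, hi, hj] using KisEquiv.refl _

theorem KisEquiv.kisEquiv_filterGE (k : Fin n) (h : KisEquiv s t) :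
    KisEquiv (filterGE k s) (filterGE k t) :=
  EqvGen.lift (filterGE k) (fun _ _ => KisStep.kisEquiv_filterGE k) h

end Filter

theorem stmt_13_general {n : ℕ} (w c d e : List (Fin n)) (k : Fin n)
    (hcw : KisEquiv c w)
    (hd : Canonical d) (hdw : KisEquiv d (filterGE k w))
    (he : Canonical e) (hec : KisEquiv e (filterGE k c)) :
    d = e := by
  have hfilter : KisEquiv (filterGE k c) (filterGE k w) := hcw.kisEquiv_filterGE k
  exact hd.eq_of_kisEquiv he <|
    .trans _ _ _ hdw (.trans _ _ _ (.symm _ _ hfilter) (.symm _ _ hec))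

/-- `Can_{{k,…,n}} w = Can_{{k,…,n}} Can w`. -/
theorem stmt_13 {n : ℕ} (w c d e : List (Fin n)) (k : Fin n)
    (hc : Canonical c) (hcw : KisEquiv c w)
    (hd : Canonical d) (hdw : KisEquiv d (filterGE k w))
    (he : Canonical e) (hec : KisEquiv e (filterGE k c)) :
    d = e :=
  stmt_13_general w c d e k hcw hd hdw he hec
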